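/- arXiv:0903.2673 — 4 statements merged into one kernel-verified Lean document; each statement's English description precedes it below -/
import Mathlib

section
/- Let f(z₁, z₂) be holomorphic in two variables near (0,0) and let F(u) = f(1/u, (log u)/u) for u in a left half-plane {Re u < −L}. Then for any real A there exist an element p of ℂ[u, 1/u, log u] and a constant M such that |F(u) − p(u)| ≤ M·|u|^(−A) for all u with Re u < −L. -/
/-- A branch of the logarithm, holomorphic on the left half-plane. -/
noncomputable def branchLog (u : ℂ) : ℂ := Complex.log (-u) + Real.pi * Complex.I

/-- The space `𝒫 = ℂ[u, 1/u, log u]`: the span of `u^l (log u)^m`, `l ∈ ℤ`, `m ∈ ℕ`. -/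
noncomputable def Pspace : Submodule ℂ (ℂ → ℂ) :=
  Submodule.span ℂ {f : ℂ → ℂ | ∃ (l : ℤ) (m : ℕ), f = fun u => u ^ l * branchLog u ^ m}

/-!
Expanding the `n`-th term of the power series of `f` at `z(u) = (1/u, (log u)/u)` by
multilinearity gives a combination of `u^(-n) (log u)^k`, so every partial sum of the series,
evaluated at `z(u)`, lies in `ℂ[u, 1/u, log u]`. Since `|log u| = O(|u|^(1/2))`, we have
`‖z(u)‖ = O(|u|^(-1/2))` as `|u| → ∞`, and Taylor's formula `f(z) - Σ_{n<N} pₙ(z) = O(‖z‖^N)`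
with `N ≥ 2A` gives the bound `O(|u|^(-A))`.
-/

open Filter Asymptotics Bornology Real Topology

theorem MultilinearMap.apply_const_prod_eq_sum {R M ι : Type*} [CommSemiring R] [AddCommMonoid M]
    [Module R M] [Fintype ι] [DecidableEq ι] (m : MultilinearMap R (fun _ : ι => R × R) M)
    (x y : R) :
    m (fun _ => (x, y)) = ∑ s : Finset ι,
      (x ^ s.card * y ^ sᶜ.card) • m (s.piecewise (fun _ => (1, 0)) (fun _ => (0, 1))) := by
  have hxy : (fun _ : ι => (x, y)) = (fun _ => x • ((1 : R), (0 : R))) + fun _ => y • (0, 1) := by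
    funext; simp
  rw [hxy, m.map_add_univ]
  refine Finset.sum_congr rfl fun s _ => ?_
  have hs : s.piecewise (fun _ => x • ((1 : R), (0 : R))) (fun _ => y • (0, 1)) =
      fun i => s.piecewise (fun _ => x) (fun _ => y) i •
        s.piecewise (fun _ => ((1 : R), (0 : R))) (fun _ => (0, 1)) i := by
    funext i; by_cases hi : i ∈ s <;> simp [hi]
  rw [hs, m.map_smul_univ, Finset.prod_piecewise]
  simp [Finset.compl_eq_univ_sdiff]

theorem zpow_mul_branchLog_pow_mem_Pspace (l : ℤ) (k : ℕ) :
    (fun u => u ^ l * branchLog u ^ k) ∈ Pspace :=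
  Submodule.subset_span ⟨l, k, rfl⟩

theorem mem_Pspace_continuousMultilinearMap_apply {n : ℕ}
    (m : ContinuousMultilinearMap ℂ (fun _ : Fin n => ℂ × ℂ) ℂ) :
    (fun u => m (fun _ => (1 / u, branchLog u / u))) ∈ Pspace := by
  classical
  have hm : (fun u => m (fun _ => (1 / u, branchLog u / u))) = ∑ s : Finset (Fin n),
      m (s.piecewise (fun _ => (1, 0)) (fun _ => (0, 1))) •
        fun u => u ^ (-n : ℤ) * branchLog u ^ (n - s.card) := by
    funext u
    rw [← m.coe_coe, MultilinearMap.apply_const_prod_eq_sum, Finset.sum_apply]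
    refine Finset.sum_congr rfl fun s _ => ?_
    have hn : u ^ n = u ^ s.card * u ^ (n - s.card) := by
      rw [← pow_add, Nat.add_sub_cancel' (by simpa using s.card_le_univ)]
    simp only [Finset.card_compl, Fintype.card_fin, Pi.smul_apply, smul_eq_mul, zpow_neg,
      zpow_natCast, hn, div_pow]
    ring
  rw [hm]
  exact Submodule.sum_mem _ fun s _ =>
    Submodule.smul_mem _ _ (zpow_mul_branchLog_pow_mem_Pspace _ _)

theorem mem_Pspace_partialSum (P : FormalMultilinearSeries ℂ (ℂ × ℂ) ℂ) (N : ℕ) :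
    (fun u => P.partialSum N (1 / u, branchLog u / u)) ∈ Pspace := by
  have hP : (fun u => P.partialSum N (1 / u, branchLog u / u)) =
      ∑ k ∈ Finset.range N, fun u => P k (fun _ => (1 / u, branchLog u / u)) := by
    funext u
    simp only [FormalMultilinearSeries.partialSum, Finset.sum_apply]
  rw [hP]
  exact Submodule.sum_mem _ fun k _ => mem_Pspace_continuousMultilinearMap_apply (P k)

theorem norm_branchLog_le (u : ℂ) : ‖branchLog u‖ ≤ |Real.log ‖u‖| + 2 * π := by
  have hlog : ‖Complex.log (-u)‖ ≤ |Real.log ‖u‖| + π := by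
    refine (Complex.norm_le_abs_re_add_abs_im _).trans ?_
    rw [Complex.log_re, Complex.log_im, norm_neg]
    gcongr
    exact Complex.abs_arg_le_pi _
  calc ‖branchLog u‖ ≤ ‖Complex.log (-u)‖ + π := by
        refine (norm_add_le _ _).trans ?_
        simp [abs_of_pos pi_pos]
    _ ≤ |Real.log ‖u‖| + 2 * π := by linarith

theorem norm_branchLog_le_sqrt {u : ℂ} (hu : 1 ≤ ‖u‖) :
    ‖branchLog u‖ ≤ (2 + 2 * π) * √‖u‖ := by
  have hs : 1 ≤ √‖u‖ := Real.one_le_sqrt.mpr hu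
  have hlog : Real.log ‖u‖ ≤ 2 * √‖u‖ := by
    have := Real.log_le_sub_one_of_pos (by positivity : 0 < √‖u‖)
    rw [Real.log_sqrt (by positivity)] at this
    linarith
  calc ‖branchLog u‖ ≤ Real.log ‖u‖ + 2 * π := by
        simpa [abs_of_nonneg (Real.log_nonneg hu)] using norm_branchLog_le u
    _ ≤ (2 + 2 * π) * √‖u‖ := by nlinarith [pi_pos]

theorem isBigO_one_div_branchLog_div_cobounded :
    (fun u : ℂ => (1 / u, branchLog u / u)) =O[cobounded ℂ] fun u => (√‖u‖)⁻¹ := by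
  refine .prod_left (.of_bound 1 ?_) (.of_bound (2 + 2 * π) ?_) <;>
    filter_upwards [eventually_cobounded_le_norm 1] with u hu <;>
    rw [norm_div, Real.norm_of_nonneg (by positivity), ← Real.sqrt_div_self]
  · rw [norm_one, one_mul]
    exact div_le_div_of_nonneg_right (Real.one_le_sqrt.mpr hu) (by positivity)
  · rw [mul_div_assoc']
    exact div_le_div_of_nonneg_right (norm_branchLog_le_sqrt hu) (by positivity)

theorem tendsto_inv_sqrt_norm_cobounded :
    Tendsto (fun u : ℂ => (√‖u‖)⁻¹) (cobounded ℂ) (𝓝 0) :=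
  tendsto_inv_atTop_zero.comp (Real.tendsto_sqrt_atTop.comp tendsto_norm_cobounded_atTop)

theorem isBigO_inv_sqrt_pow_rpow_neg {A : ℝ} {N : ℕ} (hN : 2 * A ≤ N) :
    (fun u : ℂ => (√‖u‖)⁻¹ ^ N) =O[cobounded ℂ] fun u => ‖u‖ ^ (-A) := by
  refine .of_bound 1 ?_
  filter_upwards [eventually_cobounded_le_norm 1] with u hu
  rw [one_mul, Real.norm_of_nonneg (by positivity), Real.norm_of_nonneg (by positivity),
    Real.sqrt_eq_rpow, ← Real.rpow_neg (norm_nonneg u), ← Real.rpow_mul_natCast (norm_nonneg u)]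
  exact Real.rpow_le_rpow_of_exponent_le hu (by linarith)

/-- If `f(z₁,z₂)` is holomorphic near `(0,0)` and
`F(u) = f(1/u, (log u)/u)` on a left half-plane, then for any real `A` there are
`p ∈ ℂ[u, 1/u, log u]` and `M` with `|F(u) − p(u)| ≤ M|u|^(−A)` there. -/
theorem stmt_9 (f : ℂ × ℂ → ℂ) (hf : AnalyticAt ℂ f 0) (A : ℝ) :
    ∃ L : ℝ, 0 < L ∧ ∃ p ∈ Pspace, ∃ M : ℝ,
      ∀ u : ℂ, u.re < -L →
        ‖f (1 / u, branchLog u / u) - p u‖ ≤ M * ‖u‖ ^ (-A) := by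
  obtain ⟨P, hP⟩ := hf
  set N := ⌈2 * A⌉₊
  have hz := isBigO_one_div_branchLog_div_cobounded
  have hTaylor := (hP.isBigO_sub_partialSum_pow N).comp_tendsto
    (hz.trans_tendsto tendsto_inv_sqrt_norm_cobounded)
  simp only [zero_add] at hTaylor
  obtain ⟨M, hM⟩ := (hTaylor.trans <| (hz.norm_left.pow N).trans <|
    isBigO_inv_sqrt_pow_rpow_neg (Nat.le_ceil _)).bound
  obtain ⟨R, -, hR⟩ := hasBasis_cobounded_norm.eventually_iff.mp hM
  refine ⟨max R 1, by positivity, _, mem_Pspace_partialSum P N, M, fun u hu => ?_⟩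
  have hRu : R ≤ ‖u‖ := by
    linarith [le_max_left R 1, neg_le_abs u.re, Complex.abs_re_le_norm u]
  simpa [Real.norm_of_nonneg (Real.rpow_nonneg (norm_nonneg u) _)] using hR hRu
end

section
/- Let Q₊ = {u ∈ ℂ : Re u < −L, Im u > −K} for constants K, L > 0, let a > 0, and let f be holomorphic on Q₊ with |f(u)| ≤ M|u|^(−A) on Q₊ for some A > 1. Then the series F₊(u) = −Σ_{m=1}^∞ f(u + 2πia·m − πia) converges on Q₊, defines a holomorphic function solving the difference equation F₊(u+iaπ) − F₊(u−iaπ) = f(u), and for every B < A−1 there is a constant M_B with |F₊(u)| ≤ M_B·|u|^(−B) on Q₊. -/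
/-- The upper-left quarter plane `Q₊ = {Re u < −L, Im u > −K}`. -/
def Qplus (K L : ℝ) : Set ℂ := {u : ℂ | u.re < -L ∧ -K < u.im}

/-- The one-sided sum `F₊(u) = −Σ_{m≥1} f(u + 2πiam − πia)`. -/
noncomputable def Fplus (a : ℝ) (f : ℂ → ℂ) (u : ℂ) : ℂ :=
  -∑' m : ℕ,
    f (u + 2 * (Real.pi : ℂ) * (a : ℂ) * ((m : ℂ) + 1) * Complex.I
        - (Real.pi : ℂ) * (a : ℂ) * Complex.I)

/-! Moving up by `t ≥ 0` inside `Q₊` loses at most the factor `C = 1 + K / L` of both `|u|`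
and `t`: `|u|, t ≤ C |u + it|`. Splitting `|u + it|^(-A) = |u + it|^(-B) |u + it|^(B - A)` then
bounds the `m`-th term of `F₊` by `M C^A |u|^(-B) ((2m + 1)πa)^(B - A)`, which is summable for
`0 ≤ B < A - 1`. For `B = 0` this is a majorant uniform on `Q₊`, giving holomorphy by the
Weierstrass theorem; general `B` gives the decay; the difference equation telescopes. -/

open Complex

lemma Real.rpow_neg_le_rpow_neg_mul_rpow {X y s A B : ℝ} (hy : 0 < y) (hs : 0 < s) (hB : 0 ≤ B)
    (hBA : B ≤ A) (hyX : y ≤ X) (hsX : s ≤ X) : X ^ (-A) ≤ y ^ (-B) * s ^ (B - A) := by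
  have hX : 0 < X := hy.trans_le hyX
  calc X ^ (-A) = X ^ (-B) * X ^ (B - A) := by rw [← Real.rpow_add hX]; ring_nf
    _ ≤ y ^ (-B) * s ^ (B - A) := by
      gcongr ?_ * ?_
      · exact Real.rpow_le_rpow_of_nonpos hy hyX (by linarith)
      · exact Real.rpow_le_rpow_of_nonpos hs hsX (by linarith)

lemma Real.rpow_neg_le_mul_rpow_neg {x L B B' : ℝ} (hL : 0 < L) (hLx : L ≤ x) (hB : B ≤ B') :
    x ^ (-B') ≤ L ^ (B - B') * x ^ (-B) := by
  have hx : 0 < x := hL.trans_le hLx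
  calc x ^ (-B') = x ^ (B - B') * x ^ (-B) := by rw [← Real.rpow_add hx]; ring_nf
    _ ≤ L ^ (B - B') * x ^ (-B) :=
      mul_le_mul_of_nonneg_right (Real.rpow_le_rpow_of_nonpos hL hLx (by linarith))
        (Real.rpow_nonneg hx.le _)

namespace Qplus

variable {K L A M : ℝ} {f : ℂ → ℂ} {u : ℂ}

lemma isOpen : IsOpen (Qplus K L) :=
  (isOpen_Iio.preimage continuous_re).inter (isOpen_Ioi.preimage continuous_im)

lemma nonempty (hK : 0 < K) : (Qplus K L).Nonempty :=
  ⟨(-L - 1 : ℝ), by simp [Qplus, hK]⟩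

lemma lt_abs_re (hu : u ∈ Qplus K L) : L < |u.re| := by
  linarith [hu.1, neg_le_abs u.re]

lemma lt_norm (hu : u ∈ Qplus K L) : L < ‖u‖ :=
  (lt_abs_re hu).trans_le (abs_re_le_norm u)

lemma add_mul_I_mem (hu : u ∈ Qplus K L) {t : ℝ} (ht : 0 ≤ t) : u + t * I ∈ Qplus K L := by
  refine ⟨?_, ?_⟩ <;> simp only [add_re, add_im, mul_re, mul_im, ofReal_re, ofReal_im, I_re,
    I_im] <;> linarith [hu.1, hu.2]

/-- Either `Im u ≥ 0` and the shift only increases the norm, or `|Im u| < K < (K / L) |Re u|`. -/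
lemma norm_le_mul_norm_add_mul_I (hK : 0 ≤ K) (hL : 0 < L) (hu : u ∈ Qplus K L) {t : ℝ}
    (ht : 0 ≤ t) : ‖u‖ ≤ (1 + K / L) * ‖u + t * I‖ := by
  set z := u + t * I
  have hre : z.re = u.re := by simp [z]
  have him : z.im = u.im + t := by simp [z]
  have hKL : 0 ≤ K / L := div_nonneg hK hL.le
  rcases le_or_gt 0 u.im with him0 | him0
  · have : ‖u‖ ≤ ‖z‖ := by
      rw [norm_eq_sqrt_sq_add_sq, norm_eq_sqrt_sq_add_sq, hre, him]
      gcongr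
      nlinarith
    nlinarith [norm_nonneg z]
  · have hre_le : |u.re| ≤ ‖z‖ := hre ▸ abs_re_le_norm z
    have him_le : |u.im| ≤ K / L * |u.re| := by
      rw [abs_of_neg him0, div_mul_eq_mul_div, le_div_iff₀ hL]
      nlinarith [hu.2, lt_abs_re hu]
    calc ‖u‖ ≤ |u.re| + |u.im| := norm_le_abs_re_add_abs_im u
      _ ≤ (1 + K / L) * |u.re| := by linarith
      _ ≤ (1 + K / L) * ‖z‖ := by gcongr

lemma le_mul_norm_add_mul_I (hK : 0 ≤ K) (hL : 0 < L) (hu : u ∈ Qplus K L) {t : ℝ}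
    (ht : 0 ≤ t) : t ≤ (1 + K / L) * ‖u + t * I‖ := by
  set z := u + t * I
  have hz : L < ‖z‖ := lt_norm (add_mul_I_mem hu ht)
  have him : z.im = u.im + t := by simp [z]
  have : K ≤ K / L * ‖z‖ := by
    rw [div_mul_eq_mul_div, le_div_iff₀ hL]; exact mul_le_mul_of_nonneg_left hz.le hK
  calc t = z.im - u.im := by rw [him]; ring
    _ ≤ ‖z‖ + K := by linarith [hu.2, (abs_le.mp (abs_im_le_norm z)).2]
    _ ≤ (1 + K / L) * ‖z‖ := by linarith

lemma norm_apply_add_mul_I_le (hK : 0 ≤ K) (hL : 0 < L) (hM : 0 ≤ M)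
    (hbd : ∀ u ∈ Qplus K L, ‖f u‖ ≤ M * ‖u‖ ^ (-A)) {B : ℝ} (hB : 0 ≤ B) (hBA : B ≤ A)
    (hu : u ∈ Qplus K L) {t : ℝ} (ht : 0 < t) :
    ‖f (u + t * I)‖ ≤ M * (1 + K / L) ^ A * ‖u‖ ^ (-B) * t ^ (B - A) := by
  set C := 1 + K / L
  have hC : 0 < C := by positivity
  have hsplit := Real.rpow_neg_le_rpow_neg_mul_rpow (hL.trans (lt_norm hu)) ht hB hBA
    (norm_le_mul_norm_add_mul_I hK hL hu ht.le) (le_mul_norm_add_mul_I hK hL hu ht.le)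
  calc ‖f (u + t * I)‖ ≤ M * ‖u + t * I‖ ^ (-A) := hbd _ (add_mul_I_mem hu ht.le)
    _ = M * (C ^ A * (C * ‖u + t * I‖) ^ (-A)) := by
      rw [Real.mul_rpow hC.le (norm_nonneg _), Real.rpow_neg hC.le, mul_inv_cancel_left₀]
      positivity
    _ ≤ M * C ^ A * ‖u‖ ^ (-B) * t ^ (B - A) := by
      rw [← mul_assoc, mul_assoc _ (‖u‖ ^ (-B))]; gcongr

end Qplus

namespace Fplus

noncomputable def shift (a : ℝ) (m : ℕ) : ℝ := Real.pi * a * (2 * m + 1)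

variable {K L a A M : ℝ} {f : ℂ → ℂ} {u : ℂ}

lemma shift_pos (ha : 0 < a) (m : ℕ) : 0 < shift a m := by
  unfold shift; positivity

lemma summable_shift_rpow (ha : 0 < a) {p : ℝ} (hp : p < -1) :
    Summable fun m => shift a m ^ p := by
  have h := (Real.summable_one_div_nat_add_rpow (1 / 2) (-p)).2 (by linarith)
  refine (h.mul_left ((2 * Real.pi * a) ^ p)).congr fun m => ?_
  have hm : (0 : ℝ) < m + 1 / 2 := by positivity
  rw [abs_of_pos hm, one_div, ← Real.rpow_neg hm.le, neg_neg,
    ← Real.mul_rpow (by positivity) hm.le, shift]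
  ring_nf

lemma arg_eq (a : ℝ) (u : ℂ) (m : ℕ) :
    u + 2 * (Real.pi : ℂ) * (a : ℂ) * ((m : ℂ) + 1) * I - (Real.pi : ℂ) * (a : ℂ) * I
      = u + shift a m * I := by
  simp only [shift]; push_cast; ring

lemma eq_neg_tsum (a : ℝ) (f : ℂ → ℂ) (u : ℂ) :
    Fplus a f u = -∑' m, f (u + shift a m * I) := by
  simp only [Fplus, arg_eq]

lemma add_sub_sub_eq (h : Summable fun m : ℕ => f (u - Real.pi * a * I + shift a m * I)) :
    Fplus a f (u + Real.pi * a * I) - Fplus a f (u - Real.pi * a * I) = f u := by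
  have hsucc : ∀ m : ℕ, u + Real.pi * a * I + shift a m * I
      = u - Real.pi * a * I + shift a (m + 1) * I := by
    intro m; simp only [shift]; push_cast; ring
  have hzero : u - Real.pi * a * I + shift a 0 * I = u := by
    simp only [shift]; push_cast; ring
  rw [eq_neg_tsum, eq_neg_tsum, h.tsum_eq_zero_add, hzero]
  simp only [hsucc]
  ring

lemma summable_norm_term (hK : 0 ≤ K) (hL : 0 < L) (ha : 0 < a) (hM : 0 ≤ M)
    (hbd : ∀ u ∈ Qplus K L, ‖f u‖ ≤ M * ‖u‖ ^ (-A)) {B : ℝ} (hB : 0 ≤ B) (hBA : B < A - 1)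
    (hu : u ∈ Qplus K L) : Summable fun m => ‖f (u + shift a m * I)‖ :=
  Summable.of_nonneg_of_le (fun _ => norm_nonneg _)
    (fun m => Qplus.norm_apply_add_mul_I_le hK hL hM hbd hB (by linarith) hu (shift_pos ha m))
    ((summable_shift_rpow ha (by linarith)).mul_left _)

lemma norm_le (hK : 0 ≤ K) (hL : 0 < L) (ha : 0 < a) (hM : 0 ≤ M)
    (hbd : ∀ u ∈ Qplus K L, ‖f u‖ ≤ M * ‖u‖ ^ (-A)) {B : ℝ} (hB : 0 ≤ B) (hBA : B < A - 1)
    (hu : u ∈ Qplus K L) :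
    ‖Fplus a f u‖ ≤ M * (1 + K / L) ^ A * (∑' m, shift a m ^ (B - A)) * ‖u‖ ^ (-B) := by
  have hshift := summable_shift_rpow ha (p := B - A) (by linarith)
  calc ‖Fplus a f u‖ ≤ ∑' m, ‖f (u + shift a m * I)‖ := by
        rw [eq_neg_tsum, norm_neg]
        exact norm_tsum_le_tsum_norm (summable_norm_term hK hL ha hM hbd hB hBA hu)
    _ ≤ ∑' m, M * (1 + K / L) ^ A * ‖u‖ ^ (-B) * shift a m ^ (B - A) :=
        (summable_norm_term hK hL ha hM hbd hB hBA hu).tsum_le_tsum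
          (fun m =>
            Qplus.norm_apply_add_mul_I_le hK hL hM hbd hB (by linarith) hu (shift_pos ha m))
          (hshift.mul_left _)
    _ = M * (1 + K / L) ^ A * (∑' m, shift a m ^ (B - A)) * ‖u‖ ^ (-B) := by
        rw [tsum_mul_left]; ring

lemma exists_norm_le_mul_rpow_neg (hK : 0 ≤ K) (hL : 0 < L) (ha : 0 < a) (hA : 1 < A)
    (hM : 0 ≤ M) (hbd : ∀ u ∈ Qplus K L, ‖f u‖ ≤ M * ‖u‖ ^ (-A)) {B : ℝ} (hBA : B < A - 1) :
    ∃ MB : ℝ, ∀ u ∈ Qplus K L, ‖Fplus a f u‖ ≤ MB * ‖u‖ ^ (-B) := by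
  set B' := max B 0
  set MB' := M * (1 + K / L) ^ A * ∑' m, shift a m ^ (B' - A)
  have hMB' : 0 ≤ MB' :=
    mul_nonneg (by positivity) (tsum_nonneg fun m => (Real.rpow_pos_of_pos (shift_pos ha m) _).le)
  refine ⟨MB' * L ^ (B - B'), fun u hu => ?_⟩
  calc ‖Fplus a f u‖ ≤ MB' * ‖u‖ ^ (-B') :=
        norm_le hK hL ha hM hbd (le_max_right _ _) (max_lt hBA (by linarith)) hu
    _ ≤ MB' * (L ^ (B - B') * ‖u‖ ^ (-B)) :=
        mul_le_mul_of_nonneg_left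
          (Real.rpow_neg_le_mul_rpow_neg hL (Qplus.lt_norm hu).le (le_max_left _ _)) hMB'
    _ = MB' * L ^ (B - B') * ‖u‖ ^ (-B) := by ring

lemma differentiableOn (hK : 0 ≤ K) (hL : 0 < L) (ha : 0 < a) (hA : 1 < A) (hM : 0 ≤ M)
    (hf : DifferentiableOn ℂ f (Qplus K L)) (hbd : ∀ u ∈ Qplus K L, ‖f u‖ ≤ M * ‖u‖ ^ (-A)) :
    DifferentiableOn ℂ (Fplus a f) (Qplus K L) := by
  rw [show Fplus a f = fun u => -∑' m, f (u + shift a m * I) from funext (eq_neg_tsum a f)]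
  refine (differentiableOn_tsum_of_summable_norm
    ((summable_shift_rpow ha (p := 0 - A) (by linarith)).mul_left (M * (1 + K / L) ^ A))
    (fun m => hf.comp (differentiableOn_id.add_const _)
      fun u hu => Qplus.add_mul_I_mem hu (shift_pos ha m).le)
    Qplus.isOpen fun m w hw => ?_).neg
  simpa using Qplus.norm_apply_add_mul_I_le hK hL hM hbd le_rfl (by linarith) hw
    (shift_pos ha m)

end Fplus

/-- If `f` is holomorphic on `Q₊` with `|f(u)| ≤ M|u|^(−A)`, `A > 1`, then
`F₊` converges, is holomorphic, solves `F₊(u+iaπ) − F₊(u−iaπ) = f(u)`, and satisfies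
`|F₊(u)| ≤ M_B|u|^(−B)` for every `B < A−1`. -/
theorem stmt_10 (K L a A M : ℝ) (hK : 0 < K) (hL : 0 < L) (ha : 0 < a) (hA : 1 < A)
    (f : ℂ → ℂ)
    (hf : DifferentiableOn ℂ f (Qplus K L))
    (hbd : ∀ u ∈ Qplus K L, ‖f u‖ ≤ M * ‖u‖ ^ (-A)) :
    (∀ u ∈ Qplus K L,
      Summable (fun m : ℕ =>
        f (u + 2 * (Real.pi : ℂ) * (a : ℂ) * ((m : ℂ) + 1) * Complex.I
            - (Real.pi : ℂ) * (a : ℂ) * Complex.I))) ∧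
    DifferentiableOn ℂ (Fplus a f) (Qplus K L) ∧
    (∀ u : ℂ, u - (Real.pi : ℂ) * (a : ℂ) * Complex.I ∈ Qplus K L →
      Fplus a f (u + (Real.pi : ℂ) * (a : ℂ) * Complex.I)
        - Fplus a f (u - (Real.pi : ℂ) * (a : ℂ) * Complex.I) = f u) ∧
    ∀ B : ℝ, B < A - 1 → ∃ MB : ℝ, ∀ u ∈ Qplus K L,
      ‖Fplus a f u‖ ≤ MB * ‖u‖ ^ (-B) := by
  have hM : 0 ≤ M := by
    obtain ⟨u, hu⟩ := Qplus.nonempty (L := L) hK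
    exact nonneg_of_mul_nonneg_left ((norm_nonneg _).trans (hbd u hu))
      (Real.rpow_pos_of_pos (hL.trans (Qplus.lt_norm hu)) _)
  have hsum : ∀ u ∈ Qplus K L, Summable fun m => f (u + Fplus.shift a m * I) := fun u hu =>
    (Fplus.summable_norm_term hK.le hL ha hM hbd le_rfl (by linarith) hu).of_norm
  exact ⟨fun u hu => by simpa only [Fplus.arg_eq] using hsum u hu,
    Fplus.differentiableOn hK.le hL ha hA hM hf hbd,
    fun u hu => Fplus.add_sub_sub_eq (hsum _ hu),
    fun B hB => Fplus.exists_norm_le_mul_rpow_neg hK.le hL ha hA hM hbd hB⟩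
end

section
/- Let a > 0, let A > 1 and let p be holomorphic on a left half-plane with |p(u)| ≤ M|u|^(−A) and |p'(u)| ≤ M'|u|^(−(A+1)) there. Set P(u) = ∫ p (an antiderivative) and define G(u) = (1/(2πia))·(P(u+iaπ) − P(u−iaπ)). Then |p(u) − G(u)| ≤ C·|u|^(−(A+1)) for some constant C, uniformly on a smaller left half-plane. -/
/-!
Apply the mean value inequality to `z ↦ P z - z • p u` on the disc of radius `πa` about `u`:
its derivative `p z - p u` has norm at most `πa · sup ‖p'‖` there, and its increment between
`u ∓ iπa` is `P(u + iπa) - P(u - iπa) - 2πia · p u`. Once `‖u‖ ≥ 2πa` every point of the disc has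
norm at least `‖u‖ / 2`, so `sup ‖p'‖ ≤ 2^(A+1) M' ‖u‖^(-(A+1))`.
-/

open Metric Complex

theorem norm_sub_sub_smul_le_of_norm_deriv_le {𝕜 E : Type*} [RCLike 𝕜] [NormedAddCommGroup E]
    [NormedSpace 𝕜 E] {p P : 𝕜 → E} {u v w : 𝕜} {r K : ℝ}
    (hP : ∀ z ∈ closedBall u r, HasDerivAt P (p z) z)
    (hp : ∀ z ∈ closedBall u r, DifferentiableAt 𝕜 p z)
    (hK : ∀ z ∈ closedBall u r, ‖deriv p z‖ ≤ K)
    (hv : v ∈ closedBall u r) (hw : w ∈ closedBall u r) :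
    ‖P w - P v - (w - v) • p u‖ ≤ K * r * ‖w - v‖ := by
  have hu : u ∈ closedBall u r := mem_closedBall_self (dist_nonneg.trans hv)
  have hK₀ : 0 ≤ K := (norm_nonneg _).trans (hK u hu)
  have hp_lip : ∀ z ∈ closedBall u r, ‖p z - p u‖ ≤ K * r := fun z hz =>
    calc ‖p z - p u‖ ≤ K * ‖z - u‖ :=
          (convex_closedBall u r).norm_image_sub_le_of_norm_deriv_le hp hK hu hz
      _ ≤ K * r := mul_le_mul_of_nonneg_left (mem_closedBall_iff_norm.mp hz) hK₀
  have hderiv : ∀ z ∈ closedBall u r,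
      HasDerivWithinAt (fun z => P z - z • p u) (p z - p u) (closedBall u r) z := fun z hz =>
    ((hP z hz).sub ((hasDerivAt_id z).smul_const (p u))).hasDerivWithinAt.congr_deriv
      (by simp)
  have hincr :=
    (convex_closedBall u r).norm_image_sub_le_of_norm_hasDerivWithin_le hderiv hp_lip hv hw
  convert hincr using 2
  rw [sub_smul]
  abel

theorem norm_sub_vertical_symmetric_quotient_le {p P : ℂ → ℂ} {u : ℂ} {b K : ℝ} (hb : 0 < b)
    (hP : ∀ z ∈ closedBall u b, HasDerivAt P (p z) z)
    (hp : ∀ z ∈ closedBall u b, DifferentiableAt ℂ p z)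
    (hK : ∀ z ∈ closedBall u b, ‖deriv p z‖ ≤ K) :
    ‖p u - (1 / (2 * b * I)) * (P (u + b * I) - P (u - b * I))‖ ≤ K * b := by
  have hbI : ‖(b : ℂ) * I‖ = b := by simp [hb.le]
  have hv : u - b * I ∈ closedBall u b := by
    rw [mem_closedBall_iff_norm, sub_sub_cancel_left, norm_neg, hbI]
  have hw : u + b * I ∈ closedBall u b := by
    rw [mem_closedBall_iff_norm, add_sub_cancel_left, hbI]
  have hquot := norm_sub_sub_smul_le_of_norm_deriv_le hP hp hK hv hw
  have hb₀ : (b : ℂ) ≠ 0 := by exact_mod_cast hb.ne'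
  have hnorm : ‖(2 * b * I : ℂ)‖ = 2 * b := by simp [hb.le]
  rw [show u + b * I - (u - b * I) = 2 * b * I by ring, smul_eq_mul, hnorm] at hquot
  calc ‖p u - (1 / (2 * b * I)) * (P (u + b * I) - P (u - b * I))‖
      = ‖P (u + b * I) - P (u - b * I) - 2 * b * I * p u‖ / (2 * b) := by
        rw [← hnorm, ← norm_neg, ← norm_div]
        congr 1
        field_simp
        ring
    _ ≤ K * b := by
        rw [div_le_iff₀ (by positivity)]
        linarith

theorem half_norm_le_norm_of_mem_closedBall {E : Type*} [SeminormedAddCommGroup E] {u z : E}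
    {r : ℝ} (hu : 2 * r ≤ ‖u‖) (hz : z ∈ closedBall u r) : ‖u‖ / 2 ≤ ‖z‖ := by
  have := norm_sub_norm_le u z
  rw [norm_sub_rev] at this
  linarith [mem_closedBall_iff_norm.mp hz]

theorem re_lt_of_mem_closedBall {u z : ℂ} {r c : ℝ} (hu : u.re + r < c)
    (hz : z ∈ closedBall u r) : z.re < c := by
  have := (abs_re_le_norm (z - u)).trans (mem_closedBall_iff_norm.mp hz)
  rw [sub_re] at this
  linarith [le_abs_self (z.re - u.re)]

theorem rpow_neg_le_two_rpow_mul_rpow_neg {x y s : ℝ} (hs : 0 ≤ s) (hx : 0 < x)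
    (h : x / 2 ≤ y) : y ^ (-s) ≤ 2 ^ s * x ^ (-s) :=
  calc y ^ (-s) ≤ (x / 2) ^ (-s) := Real.rpow_le_rpow_of_nonpos (by positivity) h (by linarith)
    _ = 2 ^ s * x ^ (-s) := by
      rw [Real.div_rpow hx.le zero_le_two, div_eq_mul_inv, ← Real.rpow_neg zero_le_two, neg_neg,
        mul_comm]

theorem stmt_11_general (a A L M' : ℝ) (ha : 0 < a) (hA : 1 < A)
    (p P : ℂ → ℂ)
    (hp : DifferentiableOn ℂ p {u : ℂ | u.re < -L})
    (hbd' : ∀ u : ℂ, u.re < -L →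
      ‖deriv p u‖ ≤ M' * ‖u‖ ^ (-(A + 1)))
    (hP : ∀ u : ℂ, u.re < -L → HasDerivAt P (p u) u) :
    ∃ C L' : ℝ, L ≤ L' ∧ ∀ u : ℂ, u.re < -L' →
      ‖p u -
        (1 / (2 * (Real.pi : ℂ) * Complex.I * (a : ℂ))) *
          (P (u + (Real.pi : ℂ) * (a : ℂ) * Complex.I)
            - P (u - (Real.pi : ℂ) * (a : ℂ) * Complex.I))‖
        ≤ C * ‖u‖ ^ (-(A + 1)) := by
  set b := Real.pi * a with hb_def
  have hb : 0 < b := mul_pos Real.pi_pos ha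
  refine ⟨M' * 2 ^ (A + 1) * b, |L| + 2 * b, by linarith [le_abs_self L], fun u hu => ?_⟩
  have hball : ∀ z ∈ closedBall u b, z.re < -L :=
    fun z => re_lt_of_mem_closedBall (by linarith [le_abs_self L])
  have hu_norm : 2 * b ≤ ‖u‖ := by
    linarith [abs_nonneg L, neg_le_abs u.re, abs_re_le_norm u]
  have hM' : 0 ≤ M' := nonneg_of_mul_nonneg_left
    ((norm_nonneg _).trans (hbd' u (hball u (mem_closedBall_self hb.le))))
    (Real.rpow_pos_of_pos (by linarith) _)
  have hK : ∀ z ∈ closedBall u b, ‖deriv p z‖ ≤ M' * 2 ^ (A + 1) * ‖u‖ ^ (-(A + 1)) :=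
    fun z hz => calc
      ‖deriv p z‖ ≤ M' * ‖z‖ ^ (-(A + 1)) := hbd' z (hball z hz)
      _ ≤ M' * (2 ^ (A + 1) * ‖u‖ ^ (-(A + 1))) := mul_le_mul_of_nonneg_left
          (rpow_neg_le_two_rpow_mul_rpow_neg (by linarith) (by linarith)
            (half_norm_le_norm_of_mem_closedBall hu_norm hz)) hM'
      _ = _ := by ring
  have hopen : IsOpen {u : ℂ | u.re < -L} := isOpen_lt continuous_re continuous_const
  have key := norm_sub_vertical_symmetric_quotient_le hb (fun z hz => hP z (hball z hz))
    (fun z hz => hp.differentiableAt (hopen.mem_nhds (hball z hz))) hK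
  rw [hb_def, ofReal_mul] at key
  convert key using 1
  · congr 4
    ring
  · ring

/-- With `P' = p`, `|p| ≤ M|u|^(−A)`, `|p'| ≤ M'|u|^(−(A+1))` on a left
half-plane, the function `G(u) = (1/(2πia))(P(u+iaπ) − P(u−iaπ))` satisfies
`|p(u) − G(u)| ≤ C|u|^(−(A+1))` on a smaller left half-plane. -/
theorem stmt_11 (a A L M M' : ℝ) (ha : 0 < a) (hA : 1 < A)
    (p P : ℂ → ℂ)
    (hp : DifferentiableOn ℂ p {u : ℂ | u.re < -L})
    (hbd : ∀ u : ℂ, u.re < -L → ‖p u‖ ≤ M * ‖u‖ ^ (-A))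
    (hbd' : ∀ u : ℂ, u.re < -L →
      ‖deriv p u‖ ≤ M' * ‖u‖ ^ (-(A + 1)))
    (hP : ∀ u : ℂ, u.re < -L → HasDerivAt P (p u) u) :
    ∃ C L' : ℝ, L ≤ L' ∧ ∀ u : ℂ, u.re < -L' →
      ‖p u -
        (1 / (2 * (Real.pi : ℂ) * Complex.I * (a : ℂ))) *
          (P (u + (Real.pi : ℂ) * (a : ℂ) * Complex.I)
            - P (u - (Real.pi : ℂ) * (a : ℂ) * Complex.I))‖
        ≤ C * ‖u‖ ^ (-(A + 1)) :=
  stmt_11_general a A L M' ha hA p P hp hbd' hP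
end

section
/- Let α ∈ ℝ and define w = w(u) implicitly by w^α·e^(−1/w) = e^u for Re u ≪ 0 (i.e. α·log w − 1/w = u with a suitable branch). Then there exists a holomorphic function g of two variables near (0,0) with g(0,0) = 0 and a nonzero constant a such that w(u) = (1/u)·(a + g(1/u, (log u)/u)) for Re u sufficiently negative. In particular w(u) ~ −1/u as Re u → −∞ when normalized appropriately. -/
/-!
Substituting `z₁ = 1/u`, `z₂ = branchLog u / u` and `w = w₁ / (-u)` turns `α log w − 1/w = u`
into `F(z, w₁) = 0` for a function `F` analytic near `((0, 0), 1)` with `F((0, 0), 1) = 0` and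
`∂F/∂w₁ = -1` there. The analytic implicit function theorem gives an analytic `h` with
`h 0 = 1` and `F(z, h z) = 0` near `z = 0`, and `z → 0` as `Re u → -∞`, since `log u = o(u)`.
Hence `w = (1/u)(-1 + (1 - h z))`, i.e. `a = -1` and `g = 1 - h`.
-/

open Complex Filter Topology Bornology
open scoped ContDiff

theorem AnalyticAt.exists_implicitFunction {𝕜 E : Type*} [RCLike 𝕜] [NormedAddCommGroup E]
    [NormedSpace 𝕜 E] [CompleteSpace E] {f : E × 𝕜 → 𝕜} {x₀ : E} {y₀ c : 𝕜}
    (hf : AnalyticAt 𝕜 f (x₀, y₀)) (hc : HasDerivAt (fun y ↦ f (x₀, y)) c y₀) (hc₀ : c ≠ 0) :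
    ∃ ψ : E → 𝕜, AnalyticAt 𝕜 ψ x₀ ∧ ψ x₀ = y₀ ∧
      ∀ᶠ x in 𝓝 x₀, f (x, ψ x) = f (x₀, y₀) := by
  have cdf : ContDiffAt 𝕜 ω f (x₀, y₀) := hf.contDiffAt
  have hpartial : fderiv 𝕜 f (x₀, y₀) ∘L .inr 𝕜 E 𝕜 = .smulRight (1 : 𝕜 →L[𝕜] 𝕜) c :=
    (hf.differentiableAt.hasFDerivAt.comp y₀ (hasFDerivAt_prodMk_right x₀ y₀)).unique
      hc.hasFDerivAt
  have hinv : (fderiv 𝕜 f (x₀, y₀) ∘L .inr 𝕜 E 𝕜).IsInvertible :=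
    ⟨ContinuousLinearEquiv.unitsEquivAut 𝕜 (Units.mk0 c hc₀), by ext; simp [hpartial]⟩
  exact ⟨cdf.implicitFunction (by simp) hinv,
    (cdf.contDiffAt_implicitFunction (by simp) hinv).analyticAt,
    cdf.implicitFunction_apply_self (by simp) hinv,
    cdf.eventually_apply_implicitFunction (by simp) hinv⟩

theorem Complex.log_div_of_re_pos {w v : ℂ} (hw : 0 < w.re) (hv : 0 < v.re) :
    log (w / v) = log w - log v := by
  have hw' := abs_lt.1 (abs_arg_lt_pi_div_two_iff.2 (Or.inl hw))
  have hv' := abs_lt.1 (abs_arg_lt_pi_div_two_iff.2 (Or.inl hv))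
  have hv₀ : v ≠ 0 := by rintro rfl; simp at hv
  have hvπ : v.arg ≠ Real.pi := by linarith [Real.pi_pos]
  rw [div_eq_mul_inv, log_mul (by rintro rfl; simp at hw) (inv_ne_zero hv₀), log_inv v hvπ,
    sub_eq_add_neg]
  rw [arg_inv, if_neg hvπ]
  constructor <;> linarith [Real.pi_pos]

theorem Complex.comap_re_atBot_le_cobounded : comap re atBot ≤ cobounded ℂ := by
  rw [← tendsto_id', ← tendsto_norm_atTop_iff_cobounded]
  exact tendsto_atTop_mono (fun z ↦ (neg_le_abs z.re).trans (abs_re_le_norm z))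
    (tendsto_neg_atBot_atTop.comp tendsto_comap)

theorem Complex.tendsto_log_div_self_cobounded :
    Tendsto (fun z : ℂ ↦ log z / z) (cobounded ℂ) (𝓝 0) := by
  have hreal : Tendsto (fun x : ℝ ↦ (Real.log x + Real.pi) / x) atTop (𝓝 0) := by
    simpa [add_div] using Real.isLittleO_log_id_atTop.tendsto_div_nhds_zero.add
      (tendsto_const_nhds.div_atTop tendsto_id)
  refine squeeze_zero_norm' ?_ (hreal.comp tendsto_norm_cobounded_atTop)
  filter_upwards [eventually_cobounded_le_norm 1] with z hz
  have hz₀ : 0 < ‖z‖ := one_pos.trans_le hz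
  rw [norm_div, Function.comp_apply]
  gcongr
  calc ‖log z‖ ≤ |(log z).re| + |(log z).im| := norm_le_abs_re_add_abs_im _
    _ ≤ Real.log ‖z‖ + Real.pi := by
      rw [log_re, log_im, abs_of_nonneg (Real.log_nonneg hz)]
      gcongr
      exact abs_arg_le_pi z

/-- At `((1 / u, branchLog u / u), w₁)` with `w₁ = -u * w` this is `(α log w - 1 / w - u) / u`. -/
noncomputable def rescaledEquation (α : ℝ) (p : (ℂ × ℂ) × ℂ) : ℂ :=
  α * (p.1.1 * (log p.2 + Real.pi * I) - p.1.2) + p.2⁻¹ - 1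

theorem analyticAt_rescaledEquation (α : ℝ) :
    AnalyticAt ℂ (rescaledEquation α) ((0, 0), 1) := by
  have hz₁ : AnalyticAt ℂ (fun p : (ℂ × ℂ) × ℂ ↦ p.1.1) ((0, 0), 1) :=
    analyticAt_fst.comp analyticAt_fst
  have hz₂ : AnalyticAt ℂ (fun p : (ℂ × ℂ) × ℂ ↦ p.1.2) ((0, 0), 1) :=
    analyticAt_snd.comp analyticAt_fst
  have hlog : AnalyticAt ℂ (fun p : (ℂ × ℂ) × ℂ ↦ log p.2) ((0, 0), 1) :=
    analyticAt_snd.clog one_mem_slitPlane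
  exact ((analyticAt_const.mul ((hz₁.mul (hlog.add analyticAt_const)).sub hz₂)).add
    (analyticAt_snd.inv one_ne_zero)).sub analyticAt_const

theorem rescaledEquation_base (α : ℝ) : rescaledEquation α ((0, 0), 1) = 0 := by
  simp [rescaledEquation]

theorem hasDerivAt_rescaledEquation_base (α : ℝ) :
    HasDerivAt (fun w ↦ rescaledEquation α ((0, 0), w)) (-1) 1 := by
  simpa [rescaledEquation] using (hasDerivAt_inv one_ne_zero).sub_const (1 : ℂ)

theorem log_sub_inv_eq_of_rescaledEquation_eq_zero {α : ℝ} {u w : ℂ} (hu : u.re < 0)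
    (hw : 0 < w.re) (h : rescaledEquation α ((1 / u, branchLog u / u), w) = 0) :
    α * log (w / -u) - 1 / (w / -u) = u := by
  have hu₀ : u ≠ 0 := by rintro rfl; simp at hu
  have hw₀ : w ≠ 0 := by rintro rfl; simp at hw
  have h' : α * (log w - log (-u)) * w + u - u * w = 0 := by
    simp only [rescaledEquation, branchLog] at h
    field_simp at h
    linear_combination h
  rw [log_div_of_re_pos hw (by simpa using hu), ← sub_eq_zero,
    show α * (log w - log (-u)) - 1 / (w / -u) - u
      = (α * (log w - log (-u)) * w + u - u * w) / w by field_simp; ring, h', zero_div]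

theorem tendsto_rescaledCoords_comap_re_atBot :
    Tendsto (fun u : ℂ ↦ (1 / u, branchLog u / u)) (comap re atBot) (𝓝 0) := by
  have hinv : Tendsto (fun u : ℂ ↦ 1 / u) (comap re atBot) (𝓝 0) := by
    simpa using tendsto_inv₀_cobounded.mono_left comap_re_atBot_le_cobounded
  have hlog : Tendsto (fun u : ℂ ↦ log (-u) / u) (comap re atBot) (𝓝 0) := by
    simpa [div_neg] using (tendsto_log_div_self_cobounded.comp
      (tendsto_neg_cobounded.mono_left comap_re_atBot_le_cobounded)).neg
  refine hinv.prodMk_nhds ?_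
  simpa [branchLog, add_mul, div_eq_mul_inv] using hlog.add (hinv.const_mul _)

/-- The solution `w(u)` of `α log w − 1/w = u` (i.e. `w^α e^(−1/w) = e^u`)
on a left half-plane has the form `w(u) = (1/u)(a + g(1/u, (log u)/u))` with `a ≠ 0` and
`g` holomorphic near `(0,0)`, `g(0,0) = 0`. -/
theorem stmt_13 (α : ℝ) :
    ∃ (L : ℝ) (a : ℂ) (g : ℂ × ℂ → ℂ), a ≠ 0 ∧ AnalyticAt ℂ g 0 ∧ g 0 = 0 ∧
      ∀ u : ℂ, u.re < -L →
        (α : ℂ) * Complex.log (1 / u * (a + g (1 / u, branchLog u / u)))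
          - 1 / (1 / u * (a + g (1 / u, branchLog u / u))) = u := by
  obtain ⟨h, hh, hh₀, hsol⟩ := (analyticAt_rescaledEquation α).exists_implicitFunction
    (hasDerivAt_rescaledEquation_base α) (by norm_num)
  rw [rescaledEquation_base] at hsol
  have hpos : ∀ᶠ z in 𝓝 ((0, 0) : ℂ × ℂ), 0 < (h z).re :=
    (continuous_re.continuousAt.comp hh.continuousAt).eventually (lt_mem_nhds (by simp [hh₀]))
  have hsolves : ∀ᶠ u in comap re atBot, α * log (h (1 / u, branchLog u / u) / -u)
      - 1 / (h (1 / u, branchLog u / u) / -u) = u := by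
    filter_upwards [tendsto_rescaledCoords_comap_re_atBot.eventually (hsol.and hpos),
      tendsto_comap.eventually (eventually_lt_atBot 0)] with u ⟨hF, hre⟩ hu
    exact log_sub_inv_eq_of_rescaledEquation_eq_zero hu hre hF
  obtain ⟨b, hb⟩ := eventually_atBot.1 (eventually_comap.1 hsolves)
  refine ⟨-b, -1, fun z ↦ 1 - h z, by norm_num, analyticAt_const.sub hh,
    sub_eq_zero.2 hh₀.symm, fun u hu ↦ ?_⟩
  rw [show 1 / u * (-1 + (1 - h (1 / u, branchLog u / u)))
    = h (1 / u, branchLog u / u) / -u by ring]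
  exact hb u.re (by linarith) u rfl
end
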